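/- Let f : M → G/H be smooth with local lift F : U → G on a simply connected open set U, and write φ = F⁻¹dF = φ_𝔥 + φ_𝔪 according to the eigenspace decomposition 𝔤 = 𝔥 ⊕ 𝔪 of dσ. Then the pullback under the Cartan map ι satisfies (ι∘f)⁻¹ d(ι∘f) = −2 Ad_F(φ_𝔪). -/

import Mathlib

/-!
By the quotient rule, `d(σ(F)F⁻¹) = σ(dF)F⁻¹ - σ(F)F⁻¹ dF F⁻¹`. Left-multiplying by
`(σ(F)F⁻¹)⁻¹ = Fσ(F)⁻¹` and using `σ(F)⁻¹σ(dF) = σ(F⁻¹dF) = σ(φ)` turns this into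
`F(σ(φ) - φ)F⁻¹`, and `σ(φ) - φ = -2φ_𝔪`.
-/

section Algebra

variable {R S : Type*} [Ring R] [FunLike S R R] [RingHomClass S R R]

theorem Ring.inverse_map_mul_inverse (σ : S) (u : Rˣ) :
    Ring.inverse (σ u * Ring.inverse (u : R)) = u * Ring.inverse (σ u) := by
  have h : σ u * Ring.inverse (u : R) = ↑(Units.map (σ : R →* R) u * u⁻¹) := by simp
  rw [h, Ring.inverse_unit, mul_inv_rev, inv_inv, Units.val_mul, ← Ring.inverse_unit]
  rfl

theorem Ring.inverse_map_mul_inverse_mul_sub (σ : S) {a : R} (ha : IsUnit a) (b : R) :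
    Ring.inverse (σ a * Ring.inverse a) *
        (σ b * Ring.inverse a - σ a * Ring.inverse a * b * Ring.inverse a)
      = a * (σ (Ring.inverse a * b) - Ring.inverse a * b) * Ring.inverse a := by
  obtain ⟨u, rfl⟩ := ha
  set w := Units.map (σ : R →* R) u
  have hw : σ u = w := rfl
  have hwinv : σ (Ring.inverse (u : R)) = ↑w⁻¹ := by
    rw [Ring.inverse_unit]; rfl
  rw [Ring.inverse_map_mul_inverse, map_mul, hwinv, hw, Ring.inverse_unit, Ring.inverse_unit]
  simp only [mul_sub, sub_mul, mul_assoc, Units.inv_mul_cancel_left]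

end Algebra

theorem fderiv_mul_ringInverse_apply {𝕜 E R : Type*} [NontriviallyNormedField 𝕜]
    [NormedAddCommGroup E] [NormedSpace 𝕜 E] [NormedRing R] [NormedAlgebra 𝕜 R] [CompleteSpace R]
    {F G : E → R} {F' G' : E →L[𝕜] R} {x : E}
    (hG : HasFDerivAt G G' x) (hF : HasFDerivAt F F' x) (hFx : IsUnit (F x)) (v : E) :
    fderiv 𝕜 (fun y => G y * Ring.inverse (F y)) x v
      = G' v * Ring.inverse (F x) - G x * Ring.inverse (F x) * F' v * Ring.inverse (F x) := by
  obtain ⟨u, hu⟩ := hFx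
  have hinv : HasFDerivAt (fun y => Ring.inverse (F y))
      (-(ContinuousLinearMap.mulLeftRight 𝕜 R ↑u⁻¹ ↑u⁻¹).comp F') x :=
    (hu ▸ hasFDerivAt_ringInverse u).comp x hF
  rw [fderiv_fun_mul' hG.differentiableAt hinv.differentiableAt, hG.fderiv, hinv.fderiv, ← hu,
    Ring.inverse_unit]
  simp [mul_assoc, sub_eq_neg_add]

/-- The group is realised as the units of a complete normed algebra `A`, so that
`ι∘f = σ(F)F⁻¹`, `Ad_F(ξ) = FξF⁻¹` and `φ_𝔪 = (1/2)(φ - σφ)`. -/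
theorem stmt10_general {E A : Type*} [NormedAddCommGroup E] [NormedSpace ℝ E]
    [NormedRing A] [NormedAlgebra ℝ A] [CompleteSpace A]
    (σ : A ≃ₐ[ℝ] A) (hσcont : Continuous σ)
    (F : E → A) (hF : Differentiable ℝ F) (hFu : ∀ x, IsUnit (F x))
    (φ φm : E → E → A)
    (hφ : ∀ x v, φ x v = Ring.inverse (F x) * fderiv ℝ F x v)
    (hφm : ∀ x v, φm x v = (2 : ℝ)⁻¹ • (φ x v - σ (φ x v)))
    (x : E) (v : E) :
    Ring.inverse (σ (F x) * Ring.inverse (F x)) *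
        fderiv ℝ (fun y => σ (F y) * Ring.inverse (F y)) x v
      = (-2 : ℝ) • (F x * φm x v * Ring.inverse (F x)) := by
  let σL : A →L[ℝ] A := ⟨σ.toLinearMap, hσcont⟩
  have hσF : HasFDerivAt (fun y => σ (F y)) (σL.comp (fderiv ℝ F x)) x :=
    σL.hasFDerivAt.comp x (hF x).hasFDerivAt
  have hσφ : σ (φ x v) - φ x v = (-2 : ℝ) • φm x v := by
    rw [hφm, smul_smul, ← neg_sub]; norm_num
  rw [fderiv_mul_ringInverse_apply hσF (hF x).hasFDerivAt (hFu x)]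
  refine (Ring.inverse_map_mul_inverse_mul_sub σ (hFu x) (fderiv ℝ F x v)).trans ?_
  rw [← hφ, hσφ, mul_smul_comm, smul_mul_assoc]

/-- For a symmetric space with involution `σ` and Cartan map `ι(gH) = σ(g)g⁻¹`, a lift
`F` of `f` with `φ = F⁻¹dF = φ_𝔥 + φ_𝔪` (eigenspace decomposition of `dσ`) satisfies
`(ι∘f)⁻¹ d(ι∘f) = −2 Ad_F(φ_𝔪)`.  Here the group is realised as the units of a complete
normed algebra `A`, so `ι∘f = σ(F)F⁻¹`, `Ad_F(ξ) = FξF⁻¹`, and `φ_𝔪 = (1/2)(φ − σφ)`. -/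
theorem stmt10 {E A : Type*} [NormedAddCommGroup E] [NormedSpace ℝ E]
    [NormedRing A] [NormedAlgebra ℝ A] [CompleteSpace A]
    (σ : A ≃ₐ[ℝ] A) (hσinv : ∀ a, σ (σ a) = a) (hσcont : Continuous σ)
    (F : E → A) (hF : Differentiable ℝ F) (hFu : ∀ x, IsUnit (F x))
    (φ φh φm : E → E → A)
    (hφ : ∀ x v, φ x v = Ring.inverse (F x) * fderiv ℝ F x v)
    (hφh : ∀ x v, φh x v = (2 : ℝ)⁻¹ • (φ x v + σ (φ x v)))
    (hφm : ∀ x v, φm x v = (2 : ℝ)⁻¹ • (φ x v - σ (φ x v)))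
    (x : E) (v : E) :
    Ring.inverse (σ (F x) * Ring.inverse (F x)) *
        fderiv ℝ (fun y => σ (F y) * Ring.inverse (F y)) x v
      = (-2 : ℝ) • (F x * φm x v * Ring.inverse (F x)) :=
  stmt10_general σ hσcont F hF hFu φ φm hφ hφm x v
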